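/- (Kleisli extension distributes over probabilistic choice of sets.) Let X and Y be countable sets, f : X → C(Y), p ∈ [0,1], and S, T ∈ C(X). Then f†(S ⊕_p T) = f†(S) ⊕_p f†(T). -/

import Mathlib

open scoped Classical
open Filter Topology

namespace DOL

/-- A discrete probability distribution on `X`: pointwise nonnegative with total mass 1. -/
def IsDist {X : Type*} (μ : X → ℝ) : Prop := (∀ x, 0 ≤ μ x) ∧ HasSum μ 1

/-- The point-mass (Dirac) distribution at `x`. -/
noncomputable def dirac {X : Type*} (x : X) : X → ℝ := fun y => if y = x then 1 else 0

/-- The order `⊑_D` on distributions over `X_⊥ = Option X` (with `⊥ = none`):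
pointwise comparison at proper states only. -/
def dle {X : Type*} (μ ν : Option X → ℝ) : Prop := ∀ x : X, μ (some x) ≤ ν (some x)

/-- Up-closure of a set of distributions over `X_⊥` (within `D(X_⊥)`). -/
def upClo {X : Type*} (S : Set (Option X → ℝ)) : Set (Option X → ℝ) :=
  {ν | IsDist ν ∧ ∃ μ ∈ S, dle μ ν}

/-- Convexity of a set of functions, with pointwise convex combinations. -/
def IsConvexSet {X : Type*} (S : Set (X → ℝ)) : Prop :=
  ∀ μ ∈ S, ∀ ν ∈ S, ∀ p : ℝ, 0 ≤ p → p ≤ 1 →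
    (fun x => p * μ x + (1 - p) * ν x) ∈ S

/-- Membership in `C(X)`: nonempty, consisting of distributions over `X_⊥`,
convex, (topologically) closed, and up-closed. -/
def memC {X : Type*} (S : Set (Option X → ℝ)) : Prop :=
  S.Nonempty ∧ (∀ μ ∈ S, IsDist μ) ∧ IsConvexSet S ∧ IsClosed S ∧ upClo S = S

/-- Bottom-lifting of a set-valued map: `f_⊥(⊥) = ↑{δ_⊥}`. -/
noncomputable def fbot {X Y : Type*} (f : X → Set (Option Y → ℝ)) :
    Option X → Set (Option Y → ℝ) :=
  fun x => match x with
  | some x => f x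
  | none => upClo {dirac (none : Option Y)}

/-- Kleisli extension: all convex mixtures `∑_{x ∈ supp μ} μ(x)·ν_x` with `μ ∈ S`
and `ν_x ∈ f_⊥(x)` on the support of `μ`. -/
noncomputable def kleisli {X Y : Type*} (f : X → Set (Option Y → ℝ))
    (S : Set (Option X → ℝ)) : Set (Option Y → ℝ) :=
  {ξ | ∃ μ ∈ S, ∃ ν : Option X → (Option Y → ℝ),
    (∀ x, 0 < μ x → ν x ∈ fbot f x) ∧ (∀ y, ξ y = ∑' x, μ x * ν x y)}

/-- Probabilistic choice between sets of distributions. -/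
def pchoice {X : Type*} (p : ℝ) (S T : Set (Option X → ℝ)) : Set (Option X → ℝ) :=
  {ξ | ∃ μ ∈ S, ∃ ν ∈ T, ξ = fun x => p * μ x + (1 - p) * ν x}

/-- The monad unit `η(x) = ↑{δ_x}`. -/
noncomputable def eta {X : Type*} (x : X) : Set (Option X → ℝ) := upClo {dirac (some x)}

/-- The loop characteristic functional. -/
noncomputable def Phi {St : Type*} (c : St → Set (Option St → ℝ)) (b : St → Bool)
    (f : St → Set (Option St → ℝ)) : St → Set (Option St → ℝ) :=
  fun σ => if b σ then kleisli f (c σ) else upClo {dirac (some σ)}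

/-!
A selection `ν` of `f_⊥` serving a mixture `p μ₁ + (1 - p) μ₂` serves `μ₁` and `μ₂` as well, and
linearity of the sum splits the result. Conversely, selections `ν₁` for `μ₁` and `ν₂` for `μ₂`
merge at each `x` into the convex combination of `ν₁ x` and `ν₂ x` with weights proportional to
`p μ₁ x` and `(1 - p) μ₂ x`, which lies in `f_⊥(x)` by convexity. Both directions first extend
selections from the support of `μ` to all of `X_⊥`, which is possible since every `f_⊥(x)` is
nonempty.
-/

section

variable {X Y : Type*}

lemma IsDist.le_one {μ : X → ℝ} (h : IsDist μ) (x : X) : μ x ≤ 1 :=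
  le_hasSum h.2 x fun y _ => h.1 y

lemma isDist_dirac (x : X) : IsDist (dirac x) :=
  ⟨fun y => by unfold dirac; split_ifs <;> norm_num, hasSum_ite_eq x 1⟩

lemma IsDist.mix {μ ν : X → ℝ} (hμ : IsDist μ) (hν : IsDist ν) {q : ℝ} (hq0 : 0 ≤ q)
    (hq1 : q ≤ 1) : IsDist fun x => q * μ x + (1 - q) * ν x := by
  refine ⟨fun x => add_nonneg (mul_nonneg hq0 (hμ.1 x)) (mul_nonneg (sub_nonneg.2 hq1) (hν.1 x)), ?_⟩
  simpa using (hμ.2.mul_left q).add (hν.2.mul_left (1 - q))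

lemma IsDist.summable_mul {Z : Type*} {μ : X → ℝ} (hμ : IsDist μ) {ν : X → Z → ℝ}
    (hν : ∀ x, IsDist (ν x)) (z : Z) : Summable fun x => μ x * ν x z :=
  Summable.of_nonneg_of_le (fun x => mul_nonneg (hμ.1 x) ((hν x).1 z))
    (fun x => mul_le_of_le_one_right (hμ.1 x) ((hν x).le_one z)) hμ.2.summable

lemma isConvexSet_singleton (μ : X → ℝ) : IsConvexSet {μ} := by
  rintro _ rfl _ rfl q - -
  ext x
  ring

lemma IsConvexSet.upClo {S : Set (Option X → ℝ)} (hS : IsConvexSet S) :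
    IsConvexSet (upClo S) := by
  rintro ν₁ ⟨hν₁, μ₁, hμ₁, hle₁⟩ ν₂ ⟨hν₂, μ₂, hμ₂, hle₂⟩ q hq0 hq1
  refine ⟨hν₁.mix hν₂ hq0 hq1, _, hS μ₁ hμ₁ μ₂ hμ₂ q hq0 hq1, fun x => ?_⟩
  have := mul_le_mul_of_nonneg_left (hle₁ x) hq0
  have := mul_le_mul_of_nonneg_left (hle₂ x) (sub_nonneg.2 hq1)
  dsimp only
  linarith

/-- When `a + b = 0` the junk value `0 / 0 = 0` is harmless, since then `a = b = 0`. -/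
lemma add_mul_mix_div_add {a b : ℝ} (ha : 0 ≤ a) (hb : 0 ≤ b) (u v : ℝ) :
    (a + b) * (a / (a + b) * u + (1 - a / (a + b)) * v) = a * u + b * v := by
  rcases (add_nonneg ha hb).eq_or_lt with hab | hab
  · obtain ⟨rfl, rfl⟩ := (add_eq_zero_iff_of_nonneg ha hb).1 hab.symm
    simp
  · field_simp
    ring

lemma div_add_mem_Icc {a b : ℝ} (ha : 0 ≤ a) (hb : 0 ≤ b) : a / (a + b) ∈ Set.Icc 0 1 :=
  ⟨div_nonneg ha (add_nonneg ha hb), div_le_one_of_le₀ (le_add_of_nonneg_right hb)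
    (add_nonneg ha hb)⟩

variable {f : X → Set (Option Y → ℝ)}

lemma fbot_nonempty (hne : ∀ x, (f x).Nonempty) : ∀ x, (fbot f x).Nonempty
  | some x => hne x
  | none => ⟨dirac none, isDist_dirac none, dirac none, rfl, fun _ => le_rfl⟩

lemma isDist_of_mem_fbot (hdist : ∀ x, ∀ ν ∈ f x, IsDist ν) :
    ∀ x, ∀ ν ∈ fbot f x, IsDist ν
  | some x => hdist x
  | none => fun _ hν => hν.1

lemma isConvexSet_fbot (hconv : ∀ x, IsConvexSet (f x)) : ∀ x, IsConvexSet (fbot f x)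
  | some x => hconv x
  | none => (isConvexSet_singleton _).upClo

lemma mem_kleisli_iff (hne : ∀ x, (f x).Nonempty) {S : Set (Option X → ℝ)}
    (hS : ∀ μ ∈ S, ∀ x, 0 ≤ μ x) {ξ : Option Y → ℝ} :
    ξ ∈ kleisli f S ↔ ∃ μ ∈ S, ∃ ν : Option X → (Option Y → ℝ),
      (∀ x, ν x ∈ fbot f x) ∧ ∀ y, ξ y = ∑' x, μ x * ν x y := by
  constructor
  · rintro ⟨μ, hμ, ν, hν, hξ⟩
    refine ⟨μ, hμ, fun x => if 0 < μ x then ν x else (fbot_nonempty hne x).some,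
      fun x => ?_, fun y => (hξ y).trans (tsum_congr fun x => ?_)⟩ <;> dsimp only
    · split_ifs with hx
      exacts [hν x hx, (fbot_nonempty hne x).some_mem]
    · split_ifs with hx
      · rfl
      · simp [le_antisymm (not_lt.1 hx) (hS μ hμ x)]
  · rintro ⟨μ, hμ, ν, hν, hξ⟩
    exact ⟨μ, hμ, ν, fun x _ => hν x, hξ⟩

variable {p : ℝ} (hp0 : 0 ≤ p) (hp1 : p ≤ 1) {S T : Set (Option X → ℝ)}
  (hS : ∀ μ ∈ S, IsDist μ) (hT : ∀ μ ∈ T, IsDist μ)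
include hp0 hp1 hS hT

lemma pchoice_isDist : ∀ μ ∈ pchoice p S T, IsDist μ := by
  rintro _ ⟨μ₁, hμ₁, μ₂, hμ₂, rfl⟩
  exact (hS μ₁ hμ₁).mix (hT μ₂ hμ₂) hp0 hp1

lemma kleisli_pchoice_subset (hne : ∀ x, (f x).Nonempty)
    (hdist : ∀ x, ∀ ν ∈ f x, IsDist ν) :
    kleisli f (pchoice p S T) ⊆ pchoice p (kleisli f S) (kleisli f T) := by
  intro ξ hξ
  obtain ⟨_, ⟨μ₁, hμ₁, μ₂, hμ₂, rfl⟩, ν, hν, hξ⟩ :=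
    (mem_kleisli_iff hne fun μ hμ => (pchoice_isDist hp0 hp1 hS hT μ hμ).1).1 hξ
  have hνd x := isDist_of_mem_fbot hdist x _ (hν x)
  refine ⟨_, ⟨μ₁, hμ₁, ν, fun x _ => hν x, fun _ => rfl⟩,
    _, ⟨μ₂, hμ₂, ν, fun x _ => hν x, fun _ => rfl⟩, funext fun y => ?_⟩
  rw [hξ, ← tsum_mul_left, ← tsum_mul_left, ← Summable.tsum_add
    (((hS μ₁ hμ₁).summable_mul hνd y).mul_left p)
    (((hT μ₂ hμ₂).summable_mul hνd y).mul_left (1 - p))]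
  exact tsum_congr fun x => by ring

lemma pchoice_kleisli_subset (hne : ∀ x, (f x).Nonempty)
    (hdist : ∀ x, ∀ ν ∈ f x, IsDist ν) (hconv : ∀ x, IsConvexSet (f x)) :
    pchoice p (kleisli f S) (kleisli f T) ⊆ kleisli f (pchoice p S T) := by
  rintro _ ⟨ξ₁, hξ₁, ξ₂, hξ₂, rfl⟩
  obtain ⟨μ₁, hμ₁, ν₁, hν₁, hξ₁⟩ := (mem_kleisli_iff hne fun μ hμ => (hS μ hμ).1).1 hξ₁
  obtain ⟨μ₂, hμ₂, ν₂, hν₂, hξ₂⟩ := (mem_kleisli_iff hne fun μ hμ => (hT μ hμ).1).1 hξ₂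
  have ha x : 0 ≤ p * μ₁ x := mul_nonneg hp0 ((hS μ₁ hμ₁).1 x)
  have hb x : 0 ≤ (1 - p) * μ₂ x := mul_nonneg (sub_nonneg.2 hp1) ((hT μ₂ hμ₂).1 x)
  set w : Option X → ℝ := fun x => p * μ₁ x / (p * μ₁ x + (1 - p) * μ₂ x)
  refine (mem_kleisli_iff hne fun μ hμ => (pchoice_isDist hp0 hp1 hS hT μ hμ).1).2
    ⟨_, ⟨μ₁, hμ₁, μ₂, hμ₂, rfl⟩, fun x y => w x * ν₁ x y + (1 - w x) * ν₂ x y,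
      fun x => isConvexSet_fbot hconv x _ (hν₁ x) _ (hν₂ x) _
        (div_add_mem_Icc (ha x) (hb x)).1 (div_add_mem_Icc (ha x) (hb x)).2, fun y => ?_⟩
  have hν₁d x := isDist_of_mem_fbot hdist x _ (hν₁ x)
  have hν₂d x := isDist_of_mem_fbot hdist x _ (hν₂ x)
  rw [hξ₁, hξ₂, ← tsum_mul_left, ← tsum_mul_left, ← Summable.tsum_add
    (((hS μ₁ hμ₁).summable_mul hν₁d y).mul_left p)
    (((hT μ₂ hμ₂).summable_mul hν₂d y).mul_left (1 - p))]
  exact tsum_congr fun x => by rw [add_mul_mix_div_add (ha x) (hb x)]; ring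

end

theorem kleisli_pchoice_general {X Y : Type*}
    (f : X → Set (Option Y → ℝ)) (hf : ∀ x, memC (f x))
    (p : ℝ) (hp0 : 0 ≤ p) (hp1 : p ≤ 1)
    (S T : Set (Option X → ℝ)) (hS : memC S) (hT : memC T) :
    kleisli f (pchoice p S T) = pchoice p (kleisli f S) (kleisli f T) := by
  have hne x := (hf x).1
  have hdist x := (hf x).2.1
  have hconv x := (hf x).2.2.1
  exact (kleisli_pchoice_subset hp0 hp1 hS.2.1 hT.2.1 hne hdist).antisymm
    (pchoice_kleisli_subset hp0 hp1 hS.2.1 hT.2.1 hne hdist hconv)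

/-- the Kleisli extension distributes over probabilistic choice of sets:
`f†(S ⊕_p T) = f†(S) ⊕_p f†(T)`. -/
theorem kleisli_pchoice {X Y : Type*} [Countable X] [Countable Y]
    (f : X → Set (Option Y → ℝ)) (hf : ∀ x, memC (f x))
    (p : ℝ) (hp0 : 0 ≤ p) (hp1 : p ≤ 1)
    (S T : Set (Option X → ℝ)) (hS : memC S) (hT : memC T) :
    kleisli f (pchoice p S T) = pchoice p (kleisli f S) (kleisli f T) :=
  kleisli_pchoice_general f hf p hp0 hp1 S T hS hT

end DOL
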